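/- Let s : ℕ → {1,…,N} be a sequence of arm selections by a player, let τ(t,α) = min{⌈λt^α⌉, t} and nᵢ(t,α) = Σ_{d=t−τ(t,α)+1}^{t} 1{s(d)=i}. Fix an epoch {1+φ(g−1),…,φ(g)} with φ(g) = ⌊(λ(1−α)g)^{1/(1−α)}⌋, and let t̃ be in this epoch with t̃ ≠ 1+φ(g−1). Then every time instant in {2+φ(g−1),…,t̃} lies in the window {t̃ − τ(t̃,α)+1,…,t̃}, and hence Σ_{d=2+φ(g−1)}^{t̃} 1{s(d)=i} ≤ nᵢ(t̃,α). -/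

import Mathlib

/-!
With `A = λ(1-α)` and `p = 1/(1-α)`, epoch `g` ends at `φ g = ⌊u⌋` where `u = (A g)^p`.
Since `x ↦ x^p` is convex with derivative `p x^(p-1)`, and `p A (A g)^(p-1) = λ u^α`,
we get `u - λ u^α ≤ (A (g-1))^p`. The function `x ↦ x - λ x^α` is convex and vanishes at `0`,
so it stays below `(A (g-1))^p` on all of `[0, u]`. Hence every `t ≤ φ g` has
`t - λ t^α ≤ φ (g-1) + 1`: the window of length `⌈λ t^α⌉` reaches back to `φ (g-1) + 2`.
-/

open Real Set

theorem Real.rpow_sub_rpow_le_mul_rpow_sub_one {p x y : ℝ} (hp : 1 ≤ p) (hy : 0 ≤ y)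
    (hyx : y ≤ x) : x ^ p - y ^ p ≤ p * x ^ (p - 1) * (x - y) := by
  rcases hyx.eq_or_lt with rfl | hlt
  · simp
  have hslope := (convexOn_rpow hp).slope_le_of_hasDerivAt (mem_Ici.2 hy)
    (mem_Ici.2 (hy.trans hlt.le)) hlt (hasDerivAt_rpow_const (Or.inr hp))
  rwa [slope_def_field, div_le_iff₀ (sub_pos.2 hlt)] at hslope

theorem convexOn_sub_mul_rpow {c α : ℝ} (hc : 0 ≤ c) (hα₀ : 0 ≤ α) (hα₁ : α ≤ 1) :
    ConvexOn ℝ (Ici 0) fun x : ℝ ↦ x - c * x ^ α :=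
  (convexOn_id (convex_Ici 0)).sub ((Real.concaveOn_rpow hα₀ hα₁).smul hc)

noncomputable def epochEnd (lam α g : ℝ) : ℝ := (lam * (1 - α) * g) ^ (1 / (1 - α))

theorem epochEnd_sub_mul_rpow_le {lam α g : ℝ} (hα : α ∈ Ioo 0 1) (hlam : 0 ≤ lam)
    (hg : 1 ≤ g) :
    epochEnd lam α g - lam * epochEnd lam α g ^ α ≤ epochEnd lam α (g - 1) := by
  unfold epochEnd
  set p := 1 / (1 - α) with hp_def
  set x := lam * (1 - α) * g
  have h1α : 0 < 1 - α := sub_pos.2 hα.2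
  have hA : 0 ≤ lam * (1 - α) := mul_nonneg hlam h1α.le
  have hx : 0 ≤ x := mul_nonneg hA (by linarith)
  have hp : 1 ≤ p := by rw [hp_def, le_div_iff₀ h1α]; linarith [hα.1]
  have hbound := Real.rpow_sub_rpow_le_mul_rpow_sub_one hp (mul_nonneg hA (by linarith))
    (mul_le_mul_of_nonneg_left (by linarith : g - 1 ≤ g) hA)
  have hpow : (x ^ p) ^ α = x ^ (p - 1) := by
    rw [← Real.rpow_mul hx, hp_def]; congr 1; field_simp; ring
  have hlin : p * (x - lam * (1 - α) * (g - 1)) = lam := by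
    rw [hp_def]; field_simp; ring
  have hderiv : p * x ^ (p - 1) * (x - lam * (1 - α) * (g - 1)) = lam * x ^ (p - 1) := by
    rw [mul_right_comm, hlin]
  rw [hpow]
  linarith

theorem sub_mul_rpow_le_of_le_epochEnd {lam α g T : ℝ} (hα : α ∈ Ioo 0 1) (hlam : 0 ≤ lam)
    (hg : 1 ≤ g) (hT : 0 ≤ T) (hTu : T ≤ epochEnd lam α g) :
    T - lam * T ^ α ≤ epochEnd lam α (g - 1) := by
  have hv : 0 ≤ epochEnd lam α (g - 1) :=
    Real.rpow_nonneg (mul_nonneg (mul_nonneg hlam (sub_pos.2 hα.2).le) (by linarith)) _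
  have hmax := (convexOn_sub_mul_rpow hlam hα.1.le hα.2.le).le_max_of_mem_Icc
    (mem_Ici.2 le_rfl) (mem_Ici.2 (hT.trans hTu)) ⟨hT, hTu⟩
  rw [Real.zero_rpow hα.1.ne', mul_zero, sub_zero] at hmax
  exact hmax.trans (max_le hv (epochEnd_sub_mul_rpow_le hα hlam hg))

theorem stmt_11_general (s : ℕ → ℕ)
    (lam α : ℝ) (hα : α ∈ Set.Ioo (0:ℝ) 1) (hlam : 1 ≤ lam * (1 - α))
    (τ : ℕ → ℕ) (hτ : ∀ t : ℕ, τ t = min ⌈lam * (t : ℝ) ^ α⌉₊ t)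
    (φ : ℕ → ℕ) (hφ : ∀ g, φ g = ⌊(lam * (1 - α) * (g : ℝ)) ^ (1 / (1 - α))⌋₊)
    (g : ℕ) (tt : ℕ) (ht1 : φ (g - 1) + 2 ≤ tt) (ht2 : tt ≤ φ g)
    (i : ℕ) :
    (∀ d, φ (g - 1) + 2 ≤ d → d ≤ tt → tt - τ tt + 1 ≤ d) ∧
      (∑ d ∈ Finset.Icc (φ (g - 1) + 2) tt, if s d = i then 1 else 0) ≤
        ∑ d ∈ Finset.Icc (tt - τ tt + 1) tt, if s d = i then 1 else 0 := by
  have hg : 1 ≤ g := by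
    rcases g with _ | g
    · simp only [zero_tsub] at ht1; omega
    · omega
  have hlam0 : 0 ≤ lam := nonneg_of_mul_nonneg_left (by linarith) (sub_pos.2 hα.2)
  have hepoch : (tt : ℝ) - lam * (tt : ℝ) ^ α ≤ φ (g - 1) + 1 := by
    have htu : (tt : ℝ) ≤ epochEnd lam α g :=
      (Nat.cast_le.2 (ht2.trans_eq (hφ g))).trans (Nat.floor_le (Real.rpow_nonneg
        (mul_nonneg (by linarith) (Nat.cast_nonneg g)) _))
    calc (tt : ℝ) - lam * (tt : ℝ) ^ α ≤ epochEnd lam α (g - 1) :=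
          sub_mul_rpow_le_of_le_epochEnd hα hlam0 (Nat.one_le_cast.2 hg) (Nat.cast_nonneg tt) htu
      _ ≤ φ (g - 1) + 1 := by
          rw [hφ, Nat.cast_sub hg, Nat.cast_one]; exact (Nat.lt_floor_add_one _).le
  have hwindow : tt - τ tt + 1 ≤ φ (g - 1) + 2 := by
    have hceil : tt ≤ φ (g - 1) + 1 + ⌈lam * (tt : ℝ) ^ α⌉₊ := by
      exact_mod_cast (by linarith [Nat.le_ceil (lam * (tt : ℝ) ^ α)] :
        (tt : ℝ) ≤ φ (g - 1) + 1 + ⌈lam * (tt : ℝ) ^ α⌉₊)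
    rw [hτ]; omega
  exact ⟨fun d hd _ ↦ hwindow.trans hd,
    Finset.sum_le_sum_of_subset (Finset.Icc_subset_Icc hwindow le_rfl)⟩

/-- Window containment: within the `g`-th epoch, the sliding window at any non-initial
time `tt` contains every instant from `2 + φ(g-1)` on, and hence the per-epoch selection
count of an arm `i` is bounded by `nᵢ(tt, α)`. -/
theorem stmt_11 (N : ℕ) (s : ℕ → ℕ) (hs : ∀ d, s d ∈ Finset.Icc 1 N)
    (lam α : ℝ) (hα : α ∈ Set.Ioo (0:ℝ) 1) (hlam : 1 ≤ lam * (1 - α))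
    (τ : ℕ → ℕ) (hτ : ∀ t : ℕ, τ t = min ⌈lam * (t : ℝ) ^ α⌉₊ t)
    (φ : ℕ → ℕ) (hφ : ∀ g, φ g = ⌊(lam * (1 - α) * (g : ℝ)) ^ (1 / (1 - α))⌋₊)
    (g : ℕ) (hg : 1 ≤ g) (tt : ℕ) (ht1 : φ (g - 1) + 2 ≤ tt) (ht2 : tt ≤ φ g)
    (i : ℕ) :
    (∀ d, φ (g - 1) + 2 ≤ d → d ≤ tt → tt - τ tt + 1 ≤ d) ∧
      (∑ d ∈ Finset.Icc (φ (g - 1) + 2) tt, if s d = i then 1 else 0) ≤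
        ∑ d ∈ Finset.Icc (tt - τ tt + 1) tt, if s d = i then 1 else 0 :=
  stmt_11_general s lam α hα hlam τ hτ φ hφ g tt ht1 ht2 i
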